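/- arXiv:2208.07614 — 3 statements merged into one kernel-verified Lean document; each statement's English description precedes it below -/
import Mathlib

section
/- Inverse moment bound for a binomial proportion (appendix Lemma 'Inequality on π̂'). For every n ≥ 1 and every α ∈ (0, 1/2): E[1{π̂ > 0}/π̂] ≤ (1 + C_{α,π} n^{−α})/π, where C_{α,π} := 1 + 2 (16/(π²(1 − 2α)))^{2/(1 − 2α)}. -/
/-!
Write `ε = n^{-α}/2`. On the event `B_n ≥ nπ(1 - ε)` one has
`1/π̂ ≤ 1/(π(1 - ε)) ≤ (1 + n^{-α})/π`, and everywhere `1{π̂ > 0}/π̂ ≤ n` because `B_n` is a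
nonnegative integer. Hoeffding's inequality bounds the probability of the complementary event by
`exp(-π² n^{1-2α}/2)`, and `e^{-x} ≤ (k/x)^k` with `k = 2/(1 - 2α)` makes `n` times this bound
`O(n⁻¹)`, hence at most `C_{α,π} n^{-α}`.
-/

open MeasureTheory ProbabilityTheory Finset

namespace Real

lemma exp_neg_le_div_rpow {x k : ℝ} (hx : 0 < x) (hk : 0 < k) :
    exp (-x) ≤ (k / x) ^ k := by
  have h : (x / k) ^ k ≤ exp x :=
    calc (x / k) ^ k ≤ exp (x / k) ^ k := by
          gcongr
          linarith [add_one_le_exp (x / k)]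
      _ = exp x := by rw [← exp_mul, div_mul_cancel₀ _ hk.ne']
  rw [← inv_div, inv_rpow (by positivity), exp_neg]
  exact inv_anti₀ (by positivity) h

lemma mul_exp_neg_mul_rpow_le {y c β : ℝ} (hy : 0 < y) (hc : 0 < c) (hβ : 0 < β) :
    y * exp (-(c * y ^ β)) ≤ (2 / (c * β)) ^ (2 / β) / y := by
  have hk : 0 < 2 / β := by positivity
  calc y * exp (-(c * y ^ β))
      ≤ y * (2 / β / (c * y ^ β)) ^ (2 / β) := by
        gcongr
        exact exp_neg_le_div_rpow (by positivity) hk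
    _ = (2 / (c * β)) ^ (2 / β) / y := by
        rw [div_mul_eq_div_div, div_rpow (by positivity) (by positivity), ← rpow_mul hy.le,
          show β * (2 / β) = 2 by field_simp, rpow_two, div_div, mul_comm β c]
        field_simp

lemma mul_exp_neg_mul_rpow_le_rpow_neg {y p α : ℝ} (hy : 1 ≤ y) (hp : 0 < p)
    (hα : α < 1 / 2) :
    y * exp (-(p ^ 2 / 2 * y ^ (1 - 2 * α))) ≤
      (16 / (p ^ 2 * (1 - 2 * α))) ^ (2 / (1 - 2 * α)) * y ^ (-α) := by
  have hβ : 0 < 1 - 2 * α := by linarith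
  calc _ ≤ (2 / (p ^ 2 / 2 * (1 - 2 * α))) ^ (2 / (1 - 2 * α)) / y :=
        mul_exp_neg_mul_rpow_le (by positivity) (by positivity) hβ
    _ ≤ _ := by
        rw [div_eq_mul_inv, ← rpow_neg_one]
        gcongr ?_ ^ _ * ?_
        -- the left base is `4 / (p ^ 2 * (1 - 2 * α))`; the paper's constant has `16`
        · rw [div_le_div_iff₀ (by positivity) (by positivity)]
          nlinarith [show 0 < p ^ 2 * (1 - 2 * α) by positivity]
        · exact rpow_le_rpow_of_exponent_le hy (by linarith)

lemma mul_rpow_neg_sq {y : ℝ} (hy : 0 < y) (α : ℝ) :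
    y * (y ^ (-α)) ^ 2 = y ^ (1 - 2 * α) := by
  rw [show 1 - 2 * α = 1 + -α * 2 by ring, rpow_add hy, rpow_one, rpow_mul hy.le, rpow_two]

end Real

lemma inv_mul_one_sub_half_le {p δ : ℝ} (hp : 0 < p) (hδ0 : 0 ≤ δ) (hδ1 : δ ≤ 1) :
    (p * (1 - δ / 2))⁻¹ ≤ (1 + δ) / p := by
  rw [inv_le_comm₀ (by nlinarith) (by positivity), inv_div, div_le_iff₀ (by positivity)]
  nlinarith [mul_nonneg (mul_nonneg hp.le hδ0) (sub_nonneg.2 hδ1)]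

lemma Finset.exists_sum_eq_natCast_of_eq_zero_or_eq_one {ι R : Type*} [AddCommMonoidWithOne R]
    {s : Finset ι} {f : ι → R} (hf : ∀ i ∈ s, f i = 0 ∨ f i = 1) :
    ∃ k : ℕ, ∑ i ∈ s, f i = k := by
  classical
  refine ⟨#{i ∈ s | f i = 1}, ?_⟩
  rw [natCast_card_filter, sum_congr rfl fun i hi ↦ ?_]
  rcases hf i hi with h | h <;> simp [h]

noncomputable def invPos (x : ℝ) : ℝ := if 0 < x then x⁻¹ else 0

lemma invPos_nonneg (x : ℝ) : 0 ≤ invPos x := by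
  unfold invPos
  split_ifs <;> positivity

lemma invPos_le_inv_of_le {x t : ℝ} (ht : 0 < t) (h : t ≤ x) : invPos x ≤ t⁻¹ := by
  rw [invPos, if_pos (ht.trans_le h)]
  exact inv_anti₀ ht h

lemma invPos_natCast_div_le (k : ℕ) {y : ℝ} (hy : 0 ≤ y) : invPos (k / y) ≤ y := by
  rcases Nat.eq_zero_or_pos k with rfl | hk
  · simpa [invPos] using hy
  · unfold invPos
    split_ifs
    · rw [inv_div]
      exact div_le_self hy (by exact_mod_cast hk)
    · exact hy

lemma measurable_invPos : Measurable invPos :=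
  Measurable.ite measurableSet_Ioi measurable_inv measurable_const

section

open Real

variable {Ω : Type*} [MeasurableSpace Ω] {μ : Measure Ω}

lemma integral_eq_measureReal_of_eq_zero_or_eq_one {X : Ω → ℝ} (hX : Measurable X)
    (h01 : ∀ ω, X ω = 0 ∨ X ω = 1) : μ[X] = μ.real {ω | X ω = 1} :=
  calc μ[X] = ∫ ω, Set.indicator {ω | X ω = 1} (1 : Ω → ℝ) ω ∂μ :=
        integral_congr_ae (ae_of_all _ fun ω ↦ by rcases h01 ω with h | h <;> simp [h])
    _ = μ.real {ω | X ω = 1} := integral_indicator_one (hX (measurableSet_singleton 1))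

lemma measureReal_sum_range_le_sub_le_exp {X : ℕ → Ω → ℝ} (h_indep : iIndepFun X μ)
    (hX : ∀ i, AEMeasurable (X i) μ) {a b m : ℝ} (hXab : ∀ i, ∀ᵐ ω ∂μ, X i ω ∈ Set.Icc a b)
    (hmean : ∀ i, μ[X i] = m) (n : ℕ) {t : ℝ} (ht : 0 ≤ t) :
    μ.real {ω | ∑ i ∈ range n, X i ω ≤ n * m - t} ≤ exp (-2 * t ^ 2 / (n * (b - a) ^ 2)) := by
  have := h_indep.isProbabilityMeasure
  have h_subG : ∀ i < n, HasSubgaussianMGF (fun ω ↦ m - X i ω) ((‖b - a‖₊ / 2) ^ 2) μ := by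
    intro i _
    refine (hasSubgaussianMGF_of_mem_Icc (hX i) (hXab i)).neg.congr
      (ae_of_all _ fun ω ↦ ?_)
    simp [hmean]
  have h_indep' : iIndepFun (fun i ω ↦ m - X i ω) μ :=
    h_indep.comp (fun _ x ↦ m - x) fun _ ↦ measurable_const.sub measurable_id
  have hset : {ω | ∑ i ∈ range n, X i ω ≤ n * m - t} =
      {ω | t ≤ ∑ i ∈ range n, (m - X i ω)} := by
    ext ω
    simp only [Set.mem_ofPred_eq, sum_sub_distrib, sum_const, card_range, nsmul_eq_mul]
    constructor <;> intro h <;> linarith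
  rw [hset]
  refine (HasSubgaussianMGF.measure_sum_range_ge_le_of_iIndepFun h_indep' h_subG ht).trans_eq
    (congrArg exp ?_)
  push_cast
  rw [Real.norm_eq_abs, div_pow, sq_abs,
    show 2 * (n : ℝ) * ((b - a) ^ 2 / 2 ^ 2) = n * (b - a) ^ 2 / 2 by ring, div_div_eq_mul_div]
  ring

lemma measureReal_sum_range_div_lt_sub_le_exp {X : ℕ → Ω → ℝ} (h_indep : iIndepFun X μ)
    (hX : ∀ i, AEMeasurable (X i) μ) (hX01 : ∀ i, ∀ᵐ ω ∂μ, X i ω ∈ Set.Icc 0 1) {m : ℝ}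
    (hmean : ∀ i, μ[X i] = m) {n : ℕ} (hn : 0 < n) {s : ℝ} (hs : 0 ≤ s) :
    μ.real {ω | (∑ i ∈ range n, X i ω) / n < m - s} ≤ exp (-2 * n * s ^ 2) := by
  have := h_indep.isProbabilityMeasure
  have hn' : (0 : ℝ) < n := by exact_mod_cast hn
  refine (measureReal_mono fun ω hω ↦ ?_).trans
    ((measureReal_sum_range_le_sub_le_exp h_indep hX hX01 hmean n (t := n * s)
      (by positivity)).trans_eq (congrArg exp ?_))
  · have := (div_lt_iff₀ hn').1 hω
    simp only [Set.mem_ofPred_eq]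
    linarith
  · field_simp
    ring

lemma integral_invPos_le [IsProbabilityMeasure μ] {Y : Ω → ℝ} (hY : Measurable Y) {M t : ℝ}
    (hM : ∀ ω, invPos (Y ω) ≤ M) (ht : 0 < t) :
    ∫ ω, invPos (Y ω) ∂μ ≤ t⁻¹ + M * μ.real {ω | Y ω < t} := by
  have hbad : MeasurableSet {ω | Y ω < t} := measurableSet_lt hY measurable_const
  have hint : Integrable (fun ω ↦ invPos (Y ω)) μ :=
    (integrable_const M).mono' (measurable_invPos.comp hY).aestronglyMeasurable
      (ae_of_all _ fun ω ↦ by rw [norm_of_nonneg (invPos_nonneg _)]; exact hM ω)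
  have hpt : ∀ ω, invPos (Y ω) ≤ t⁻¹ + {ω | Y ω < t}.indicator (fun _ ↦ M) ω := by
    intro ω
    by_cases hω : ω ∈ {ω | Y ω < t}
    · rw [Set.indicator_of_mem hω]
      linarith [hM ω, inv_pos.2 ht]
    · rw [Set.indicator_of_notMem hω, add_zero]
      exact invPos_le_inv_of_le ht (not_lt.1 hω)
  calc ∫ ω, invPos (Y ω) ∂μ
      ≤ ∫ ω, (t⁻¹ + {ω | Y ω < t}.indicator (fun _ ↦ M) ω) ∂μ :=
        integral_mono hint ((integrable_const _).add ((integrable_const M).indicator hbad)) hpt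
    _ = t⁻¹ + M * μ.real {ω | Y ω < t} := by
        rw [integral_add (integrable_const _) ((integrable_const M).indicator hbad),
          integral_const, integral_indicator_const _ hbad, probReal_univ, one_smul, smul_eq_mul,
          mul_comm]

end

/-- **Inverse moment bound for a binomial proportion** (appendix Lemma "Inequality on π̂"):
if `π̂ = B_n/n` with `B_n = Σ_{i<n} A_i` a sum of `n` i.i.d. Bernoulli(`π`) variables
(so that `B_n` is binomial with parameters `n` and `π`), then for every `n ≥ 1` and every
`α ∈ (0, 1/2)`,
`E[1{π̂ > 0}/π̂] ≤ (1 + C_{α,π} n^{−α})/π` where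
`C_{α,π} = 1 + 2(16/(π²(1 − 2α)))^{2/(1 − 2α)}`. -/
theorem binomial_inverse_moment_bound
    {Ω : Type*} [MeasurableSpace Ω] (μ : Measure Ω) [IsProbabilityMeasure μ]
    (A : ℕ → Ω → ℝ) (π : ℝ) (hπ0 : 0 < π) (hπ1 : π < 1)
    (measA : ∀ i, Measurable (A i))
    (A01 : ∀ i ω, A i ω = 0 ∨ A i ω = 1)
    (indep : iIndepFun (β := fun _ => ℝ) A μ)
    (pA : ∀ i, μ {ω | A i ω = 1} = ENNReal.ofReal π)
    (n : ℕ) (hn : 1 ≤ n) (α : ℝ) (hα0 : 0 < α) (hα1 : α < 1 / 2) :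
    (∫ ω, (if 0 < (∑ i ∈ Finset.range n, A i ω) / n
        then ((∑ i ∈ Finset.range n, A i ω) / n)⁻¹ else 0) ∂μ)
      ≤ (1 + (1 + 2 * (16 / (π ^ 2 * (1 - 2 * α))) ^ (2 / (1 - 2 * α)))
          * (n : ℝ) ^ (-α)) / π := by
  have hn1 : (1 : ℝ) ≤ n := by exact_mod_cast hn
  have hn0 : (0 : ℝ) < n := by positivity
  have h2α : 0 < 1 - 2 * α := by linarith
  set δ : ℝ := (n : ℝ) ^ (-α)
  have hδ1 : δ ≤ 1 := Real.rpow_le_one_of_one_le_of_nonpos hn1 (by linarith)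
  have hcount : ∀ ω, invPos ((∑ i ∈ range n, A i ω) / n) ≤ n := fun ω ↦ by
    obtain ⟨k, hk⟩ := exists_sum_eq_natCast_of_eq_zero_or_eq_one fun i _ ↦ A01 i ω
    exact hk ▸ invPos_natCast_div_le k hn0.le
  have hmean : ∀ i, μ[A i] = π := fun i ↦ by
    rw [integral_eq_measureReal_of_eq_zero_or_eq_one (measA i) (A01 i), measureReal_def, pA i,
      ENNReal.toReal_ofReal hπ0.le]
  have htail : μ.real {ω | (∑ i ∈ range n, A i ω) / n < π * (1 - δ / 2)} ≤
      Real.exp (-(π ^ 2 / 2 * n ^ (1 - 2 * α))) := by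
    rw [mul_one_sub, ← Real.mul_rpow_neg_sq hn0]
    refine (measureReal_sum_range_div_lt_sub_le_exp indep (fun i ↦ (measA i).aemeasurable)
      (fun i ↦ ae_of_all _ fun ω ↦ by rcases A01 i ω with h | h <;> simp [h]) hmean hn
      (s := π * (δ / 2))
      (by positivity)).trans_eq (congrArg Real.exp ?_)
    ring
  calc _ ≤ (π * (1 - δ / 2))⁻¹ +
        n * μ.real {ω | (∑ i ∈ range n, A i ω) / n < π * (1 - δ / 2)} :=
        integral_invPos_le ((Finset.measurable_sum _ fun i _ ↦ measA i).div_const _) hcount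
          (mul_pos hπ0 (by linarith))
    _ ≤ (1 + δ) / π + (16 / (π ^ 2 * (1 - 2 * α))) ^ (2 / (1 - 2 * α)) * δ :=
        add_le_add (inv_mul_one_sub_half_le hπ0 (by positivity) hδ1)
          ((mul_le_mul_of_nonneg_left htail hn0.le).trans
            (Real.mul_exp_neg_mul_rpow_le_rpow_neg hn1 hπ0 hα1))
    _ ≤ _ := by
        have : 0 < π ^ 2 * (1 - 2 * α) := by positivity
        have : 0 ≤ (16 / (π ^ 2 * (1 - 2 * α))) ^ (2 / (1 - 2 * α)) * δ := by positivity
        rw [div_add' _ _ _ hπ0.ne', div_le_div_iff_of_pos_right hπ0]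
        nlinarith
end

section
/- Comparison of the Horvitz–Thompson and difference-in-means asymptotic variances (appendix variance-inequality Lemma). With V_HT and V_DM,∞ as defined in the context, V_DM,∞ = V_HT − (√((1 − π)/π) · E[Y^{(1)}] + √(π/(1 − π)) · E[Y^{(0)}])²; in particular V_DM,∞ ≤ V_HT. -/
/-!
Since `Var[Y] = E[Y²] - E[Y]²`, the gap `V_HT - V_DM,∞` equals
`m₁²/π + m₀²/(1 - π) - (m₁ - m₀)² = ((1 - π)/π) m₁² + (π/(1 - π)) m₀² + 2 m₁ m₀` with `mᵢ = E[Y⁽ⁱ⁾]`,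
a perfect square because the two odds ratios `(1 - π)/π` and `π/(1 - π)` multiply to `1`.
-/

open MeasureTheory ProbabilityTheory

lemma sqrt_odds_mul_add_sqrt_odds_mul_sq {p : ℝ} (hp0 : 0 < p) (hp1 : p < 1) (x y : ℝ) :
    (Real.sqrt ((1 - p) / p) * x + Real.sqrt (p / (1 - p)) * y) ^ 2
      = x ^ 2 / p + y ^ 2 / (1 - p) - (x - y) ^ 2 := by
  have hq : 0 < 1 - p := by linarith
  have ha : Real.sqrt ((1 - p) / p) ^ 2 = (1 - p) / p := Real.sq_sqrt (by positivity)
  have hb : Real.sqrt (p / (1 - p)) ^ 2 = p / (1 - p) := Real.sq_sqrt (by positivity)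
  have hab : Real.sqrt ((1 - p) / p) * Real.sqrt (p / (1 - p)) = 1 := by
    rw [← Real.sqrt_mul (by positivity), div_mul_div_comm, mul_comm (1 - p),
      div_self (by positivity), Real.sqrt_one]
  calc (Real.sqrt ((1 - p) / p) * x + Real.sqrt (p / (1 - p)) * y) ^ 2
      = Real.sqrt ((1 - p) / p) ^ 2 * x ^ 2 + Real.sqrt (p / (1 - p)) ^ 2 * y ^ 2
          + 2 * (Real.sqrt ((1 - p) / p) * Real.sqrt (p / (1 - p))) * (x * y) := by ring
    _ = x ^ 2 / p + y ^ 2 / (1 - p) - (x - y) ^ 2 := by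
      rw [ha, hb, hab]
      field_simp
      ring

lemma variance_eq_integral_sq_sub_sq {Ω : Type*} [MeasurableSpace Ω] {μ : Measure Ω}
    [IsProbabilityMeasure μ] {X : Ω → ℝ} (hX : MemLp X 2 μ) :
    variance X μ = (∫ ω, X ω ^ 2 ∂μ) - (∫ ω, X ω ∂μ) ^ 2 := by
  simpa only [Pi.pow_apply] using variance_eq_sub hX

/-- **Comparison of the Horvitz–Thompson and difference-in-means asymptotic variances**
(appendix variance-inequality Lemma): with
`V_HT = E[(Y⁽¹⁾)²]/π + E[(Y⁽⁰⁾)²]/(1 − π) − (E[Y⁽¹⁾ − Y⁽⁰⁾])²` and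
`V_DM,∞ = Var[Y⁽¹⁾]/π + Var[Y⁽⁰⁾]/(1 − π)`, one has
`V_DM,∞ = V_HT − (√((1 − π)/π) E[Y⁽¹⁾] + √(π/(1 − π)) E[Y⁽⁰⁾])²`;
in particular `V_DM,∞ ≤ V_HT`. -/
theorem dm_variance_le_ht_variance
    {Ω : Type*} [MeasurableSpace Ω] (μ : Measure Ω) [IsProbabilityMeasure μ]
    (Y1 Y0 : Ω → ℝ) (hY1 : MemLp Y1 2 μ) (hY0 : MemLp Y0 2 μ)
    (π : ℝ) (hπ0 : 0 < π) (hπ1 : π < 1) :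
    variance Y1 μ / π + variance Y0 μ / (1 - π)
        = ((∫ ω, (Y1 ω) ^ 2 ∂μ) / π + (∫ ω, (Y0 ω) ^ 2 ∂μ) / (1 - π)
            - (∫ ω, Y1 ω - Y0 ω ∂μ) ^ 2)
          - (Real.sqrt ((1 - π) / π) * (∫ ω, Y1 ω ∂μ)
              + Real.sqrt (π / (1 - π)) * (∫ ω, Y0 ω ∂μ)) ^ 2 ∧
    variance Y1 μ / π + variance Y0 μ / (1 - π)
        ≤ (∫ ω, (Y1 ω) ^ 2 ∂μ) / π + (∫ ω, (Y0 ω) ^ 2 ∂μ) / (1 - π)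
            - (∫ ω, Y1 ω - Y0 ω ∂μ) ^ 2 := by
  have hdecomp : variance Y1 μ / π + variance Y0 μ / (1 - π)
      = ((∫ ω, (Y1 ω) ^ 2 ∂μ) / π + (∫ ω, (Y0 ω) ^ 2 ∂μ) / (1 - π)
          - (∫ ω, Y1 ω - Y0 ω ∂μ) ^ 2)
        - (Real.sqrt ((1 - π) / π) * (∫ ω, Y1 ω ∂μ)
            + Real.sqrt (π / (1 - π)) * (∫ ω, Y0 ω ∂μ)) ^ 2 := by
    rw [sqrt_odds_mul_add_sqrt_odds_mul_sq hπ0 hπ1,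
      integral_sub (hY1.integrable one_le_two) (hY0.integrable one_le_two),
      variance_eq_integral_sq_sub_sq hY1, variance_eq_integral_sq_sub_sq hY0]
    ring
  refine ⟨hdecomp, ?_⟩
  rw [hdecomp]
  exact sub_le_self _ (sq_nonneg _)
end

section
/- Convergence of the truncated inverse binomial proportion (intermediate result proved, via Chernoff's inequality, in the proof of Corollary 1). lim_{n→∞} E[1{Z_n > 0} · n/Z_n] = 1/p. -/
/-!
Split the expectation along the event `{Z_n > np/2}`. There the integrand `n / Z_n` is at most
`2/p`, and it converges almost surely to `1/p` by the strong law of large numbers, so dominated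
convergence applies. On the complement the integrand is at most `n`, because `Z_n` is an integer,
while Chernoff's bound makes the probability of the complement at most `rⁿ` with `r < 1`; so this
part is at most `n rⁿ → 0`.
-/

open MeasureTheory ProbabilityTheory Filter
open Finset Topology unitInterval

section Bernoulli

variable {Ω : Type*} [MeasurableSpace Ω] {μ : Measure Ω} {X : Ω → ℝ} {p : I}

lemma hasLaw_bernoulliMeasure_of_zero_or_one [IsProbabilityMeasure μ] (hXm : Measurable X)
    (hX : ∀ ω, X ω = 0 ∨ X ω = 1) (hp : μ {ω | X ω = 1} = ENNReal.ofReal p) :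
    HasLaw X Ber(1, 0, p) μ where
  aemeasurable := hXm.aemeasurable
  map_eq := by
    classical
    ext s hs
    have hE : MeasurableSet {ω | X ω = 1} := hXm (measurableSet_singleton 1)
    have hpre : X ⁻¹' s =
        {ω | X ω = 1} ∩ {_ω | (1 : ℝ) ∈ s} ∪ {ω | X ω = 1}ᶜ ∩ {_ω | (0 : ℝ) ∈ s} := by
      ext ω
      rcases hX ω with h | h <;> simp [h]
    have hone : μ {ω | X ω = 1} = toNNReal p := by
      rw [hp, ENNReal.ofReal, Real.toNNReal_of_nonneg (nonneg p)]; rfl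
    have hzero : μ {ω | X ω = 1}ᶜ = toNNReal (σ p) := by
      rw [prob_compl_eq_one_sub hE, hone, ← ENNReal.coe_one, ← toNNReal_add_toNNReal_symm p,
        ENNReal.coe_add, ENNReal.add_sub_cancel_left ENNReal.coe_ne_top]
    rw [Measure.map_apply hXm hs, bernoulliMeasure_apply p hs, hpre]
    split_ifs with h1 h0 h0 <;> simp [h1, h0, hone, hzero]

lemma ProbabilityTheory.HasLaw.integrable_comp {Y : Type*} [MeasurableSpace Y] {ν : Measure Y}
    {Z : Ω → Y} (hZ : HasLaw Z ν μ) {f : Y → ℝ} (hfm : AEStronglyMeasurable f ν)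
    (hf : Integrable f ν) :
    Integrable (f ∘ Z) μ := by
  rw [← hZ.map_eq] at hfm hf
  exact (integrable_map_measure hfm hZ.aemeasurable).1 hf

lemma integral_eq_of_hasLaw_bernoulliMeasure (hX : HasLaw X Ber(1, 0, p) μ) :
    μ[X] = (p : ℝ) := by
  simp [hX.integral_eq, integral_bernoulliMeasure]

lemma mgf_eq_of_hasLaw_bernoulliMeasure (hX : HasLaw X Ber(1, 0, p) μ) (t : ℝ) :
    mgf X μ t = p * Real.exp t + (1 - p) := by
  have h := hX.integral_comp (f := fun x => Real.exp (t * x)) (by fun_prop)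
  simpa [mgf, integral_bernoulliMeasure] using h

lemma integrable_exp_mul_of_hasLaw_bernoulliMeasure (hX : HasLaw X Ber(1, 0, p) μ) (t : ℝ) :
    Integrable (fun ω => Real.exp (t * X ω)) μ :=
  hX.integrable_comp (f := fun x => Real.exp (t * x)) (by fun_prop) (integrable_bernoulliMeasure ..)

/-- `e^{p/2} 𝔼[e^{-X}]` for `X ∼ Ber(p)`: the Chernoff bound at `t = -1` for the event
`{S_n ≤ np/2}` is its `n`-th power. -/
noncomputable def binomialLowerTailRate (p : I) : ℝ :=
  Real.exp (p / 2) * (p * Real.exp (-1) + (1 - p))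

lemma binomialLowerTailRate_nonneg (p : I) : 0 ≤ binomialLowerTailRate p :=
  mul_nonneg (Real.exp_pos _).le
    (add_nonneg (mul_nonneg (nonneg p) (Real.exp_pos _).le) (one_minus_nonneg p))

lemma binomialLowerTailRate_lt_one (hp : 0 < (p : ℝ)) : binomialLowerTailRate p < 1 := by
  calc binomialLowerTailRate p
      ≤ Real.exp (p / 2) * Real.exp ((Real.exp (-1) - 1) * p) := by
        unfold binomialLowerTailRate
        gcongr
        linarith [Real.add_one_le_exp ((Real.exp (-1) - 1) * p)]
    _ = Real.exp (p * (Real.exp (-1) - 1 / 2)) := by rw [← Real.exp_add]; ring_nf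
    _ < 1 := Real.exp_lt_one_iff.2
        (mul_neg_of_pos_of_neg hp (by linarith [Real.exp_neg_one_lt_half]))

lemma measureReal_sum_le_half_le_binomialLowerTailRate_pow [IsProbabilityMeasure μ] {ι : Type*}
    {A : ι → Ω → ℝ} (measA : ∀ i, Measurable (A i)) (indep : iIndepFun A μ)
    (hA : ∀ i, HasLaw (A i) Ber(1, 0, p) μ) (s : Finset ι) :
    μ.real {ω | ∑ i ∈ s, A i ω ≤ #s * p / 2} ≤ binomialLowerTailRate p ^ #s := by
  have hint := indep.integrable_exp_mul_sum (t := -1) (s := s) measA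
    fun i _ => integrable_exp_mul_of_hasLaw_bernoulliMeasure (hA i) (-1)
  have h := measure_le_le_exp_mul_mgf (X := ∑ i ∈ s, A i) (#s * p / 2) (by norm_num) hint
  rw [indep.mgf_sum measA,
    prod_congr rfl fun i _ => mgf_eq_of_hasLaw_bernoulliMeasure (hA i) (-1), prod_const] at h
  convert h using 2
  · simp
  · rw [binomialLowerTailRate, mul_pow, ← Real.exp_nat_mul]; ring_nf

end Bernoulli

noncomputable def truncDiv (a s : ℝ) : ℝ := if 0 < s then a / s else 0

lemma norm_truncDiv_le {a s : ℝ} (ha : 0 ≤ a) (hs : s = 0 ∨ 1 ≤ s) : ‖truncDiv a s‖ ≤ a := by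
  rcases hs with rfl | hs
  · simpa [truncDiv] using ha
  · rw [truncDiv, if_pos (by linarith), Real.norm_of_nonneg (by positivity)]
    exact div_le_self ha hs

@[fun_prop]
lemma measurable_truncDiv (a : ℝ) : Measurable (truncDiv a) :=
  Measurable.ite (measurableSet_lt measurable_const measurable_id) (by fun_prop) measurable_const

lemma sum_eq_zero_or_one_le {ι R : Type*} [Semiring R] [PartialOrder R] [IsOrderedRing R]
    {s : Finset ι} {f : ι → R} (hf : ∀ i ∈ s, f i = 0 ∨ f i = 1) :
    ∑ i ∈ s, f i = 0 ∨ 1 ≤ ∑ i ∈ s, f i := by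
  refine or_iff_not_imp_left.2 fun h => ?_
  obtain ⟨i, hi, hfi⟩ := exists_ne_zero_of_sum_ne_zero h
  calc 1 = f i := ((hf i hi).resolve_left hfi).symm
    _ ≤ ∑ i ∈ s, f i := single_le_sum (fun j hj => by rcases hf j hj with h | h <;> simp [h]) hi

section TruncatedInverse

variable {Ω : Type*} [MeasurableSpace Ω] {μ : Measure Ω} [IsProbabilityMeasure μ]
  {S : ℕ → Ω → ℝ} {p r : ℝ}

lemma tendsto_setIntegral_truncDiv_of_ae_tendsto (hp : 0 < p) (hS : ∀ n, Measurable (S n))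
    (hlim : ∀ᵐ ω ∂μ, Tendsto (fun n => S n ω / n) atTop (𝓝 p)) :
    Tendsto (fun n : ℕ => ∫ ω in {ω | n * p / 2 < S n ω}, truncDiv n (S n ω) ∂μ)
      atTop (𝓝 (1 / p)) := by
  have hset : ∀ n : ℕ, MeasurableSet {ω | n * p / 2 < S n ω} :=
    fun n => measurableSet_lt measurable_const (hS n)
  simp_rw [← integral_indicator (hset _)]
  have hbound : ∀ (n : ℕ) ω, ‖{ω | n * p / 2 < S n ω}.indicator (fun ω => truncDiv n (S n ω)) ω‖
      ≤ 2 / p := by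
    intro n ω
    simp only [Set.indicator_apply, Set.mem_ofPred_eq]
    split_ifs with hω
    · have hSpos : 0 < S n ω := lt_of_le_of_lt (by positivity) hω
      rw [truncDiv, if_pos hSpos, Real.norm_of_nonneg (by positivity),
        div_le_div_iff₀ hSpos hp]
      linarith
    · rw [norm_zero]; positivity
  have hconv := tendsto_integral_of_dominated_convergence (f := fun _ => 1 / p) (fun _ => 2 / p)
    (fun n => (((measurable_truncDiv n).comp (hS n)).indicator (hset n)).aestronglyMeasurable)
    (integrable_const (μ := μ) _) (fun n => ae_of_all _ (hbound n)) ?_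
  · simpa [Function.comp_def] using hconv
  filter_upwards [hlim] with ω hω
  have hinv : Tendsto (fun n : ℕ => (S n ω / n)⁻¹) atTop (𝓝 (1 / p)) := by
    simpa using hω.inv₀ hp.ne'
  refine hinv.congr' ?_
  filter_upwards [hω.eventually (eventually_gt_nhds (half_lt_self hp)), eventually_gt_atTop 0]
    with n hn hn0
  have hn_pos : (0 : ℝ) < n := by exact_mod_cast hn0
  have hω : n * p / 2 < S n ω := by rw [lt_div_iff₀ hn_pos] at hn; linarith
  have hSpos : 0 < S n ω := lt_of_le_of_lt (by positivity) hω
  simp only [Set.indicator_of_mem (s := {ω | n * p / 2 < S n ω}) hω, Function.comp_apply,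
    truncDiv, if_pos hSpos, inv_div]

theorem tendsto_integral_truncDiv (hp : 0 < p) (hS : ∀ n, Measurable (S n))
    (hS01 : ∀ n ω, S n ω = 0 ∨ 1 ≤ S n ω)
    (hlim : ∀ᵐ ω ∂μ, Tendsto (fun n => S n ω / n) atTop (𝓝 p))
    (hr0 : 0 ≤ r) (hr1 : r < 1) (htail : ∀ n : ℕ, μ.real {ω | S n ω ≤ n * p / 2} ≤ r ^ n) :
    Tendsto (fun n : ℕ => ∫ ω, truncDiv n (S n ω) ∂μ) atTop (𝓝 (1 / p)) := by
  have hbound : ∀ (n : ℕ) ω, ‖truncDiv n (S n ω)‖ ≤ n :=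
    fun n ω => norm_truncDiv_le n.cast_nonneg (hS01 n ω)
  have hint : ∀ n : ℕ, Integrable (fun ω => truncDiv n (S n ω)) μ := fun n =>
    (integrable_const (n : ℝ)).mono' ((measurable_truncDiv n).comp (hS n)).aestronglyMeasurable
      (ae_of_all _ (hbound n))
  have hlower : Tendsto (fun n : ℕ => ∫ ω in {ω | n * p / 2 < S n ω}ᶜ, truncDiv n (S n ω) ∂μ)
      atTop (𝓝 0) := by
    refine squeeze_zero_norm (fun n => ?_) (tendsto_self_mul_const_pow_of_lt_one hr0 hr1)
    calc _ ≤ n * μ.real {ω | n * p / 2 < S n ω}ᶜ :=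
          norm_setIntegral_le_of_norm_le_const (measure_lt_top _ _) fun ω _ => hbound n ω
      _ ≤ n * r ^ n := by
          gcongr
          simpa [Set.compl_ofPred] using htail n
  have hsplit : ∀ n : ℕ, ∫ ω in {ω | n * p / 2 < S n ω}, truncDiv n (S n ω) ∂μ +
      ∫ ω in {ω | n * p / 2 < S n ω}ᶜ, truncDiv n (S n ω) ∂μ = ∫ ω, truncDiv n (S n ω) ∂μ :=
    fun n => integral_add_compl (measurableSet_lt measurable_const (hS n)) (hint n)
  simpa [hsplit] using (tendsto_setIntegral_truncDiv_of_ae_tendsto hp hS hlim).add hlower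

end TruncatedInverse

/-- **Convergence of the truncated inverse binomial proportion** (intermediate result in the
proof of Corollary 1): if `Z_n = Σ_{i<n} A_i` with `A_i` i.i.d. Bernoulli(`p`), `p ∈ (0,1]`
(so that `Z_n` is binomial with parameters `n` and `p`), then
`E[1{Z_n > 0} · n/Z_n] → 1/p` as `n → ∞`. -/
theorem truncated_inverse_binomial_tendsto
    {Ω : Type*} [MeasurableSpace Ω] (μ : Measure Ω) [IsProbabilityMeasure μ]
    (A : ℕ → Ω → ℝ) (p : ℝ) (hp0 : 0 < p) (hp1 : p ≤ 1)
    (measA : ∀ i, Measurable (A i))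
    (A01 : ∀ i ω, A i ω = 0 ∨ A i ω = 1)
    (indep : iIndepFun (β := fun _ => ℝ) A μ)
    (pA : ∀ i, μ {ω | A i ω = 1} = ENNReal.ofReal p) :
    Tendsto (fun n : ℕ =>
        ∫ ω, (if 0 < (∑ i ∈ Finset.range n, A i ω)
          then (n : ℝ) / (∑ i ∈ Finset.range n, A i ω) else 0) ∂μ)
      atTop (nhds (1 / p)) := by
  set q : I := ⟨p, hp0.le, hp1⟩
  have hlaw : ∀ i, HasLaw (A i) Ber(1, 0, q) μ :=
    fun i => hasLaw_bernoulliMeasure_of_zero_or_one (measA i) (A01 i) (pA i)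
  have hslln : ∀ᵐ ω ∂μ, Tendsto (fun n : ℕ => (∑ i ∈ range n, A i ω) / n) atTop (𝓝 p) := by
    simpa [integral_eq_of_hasLaw_bernoulliMeasure (hlaw 0)] using
      strong_law_ae_real A ((hlaw 0).integrable_comp (f := id) aestronglyMeasurable_id
        (integrable_bernoulliMeasure ..)) (fun i j hij => indep.indepFun hij)
        (fun i => (hlaw i).identDistrib (hlaw 0))
  exact tendsto_integral_truncDiv hp0 (fun n => Finset.measurable_sum _ fun i _ => measA i)
    (fun n ω => sum_eq_zero_or_one_le fun i _ => A01 i ω) hslln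
    (binomialLowerTailRate_nonneg q) (binomialLowerTailRate_lt_one (p := q) hp0)
    fun n => by
      simpa using measureReal_sum_le_half_le_binomialLowerTailRate_pow measA indep hlaw (range n)
end
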